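/- Let S be a multiplicatively closed subset of a ring R consisting of central regular elements, and let S⁻¹R be the localization of R at S. Then R is central linear Armendariz if and only if S⁻¹R is central linear Armendariz. -/

import Mathlib

open Polynomial

/-- A ring `R` is *central linear Armendariz* if whenever the product of two linear
polynomials `(a₀ + a₁x)(b₀ + b₁x) = 0` in `R[x]`, each product `aᵢbⱼ` is central in `R`. -/
def CentralLinearArmendariz (R : Type*) [Ring R] : Prop :=
  ∀ a₀ a₁ b₀ b₁ : R,
    (C a₀ + C a₁ * X) * (C b₀ + C b₁ * X) = 0 →
      a₀ * b₀ ∈ Set.center R ∧ a₀ * b₁ ∈ Set.center R ∧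
      a₁ * b₀ ∈ Set.center R ∧ a₁ * b₁ ∈ Set.center R

/-- A ring `R` is *linear Armendariz* if whenever the product of two linear
polynomials `(a₀ + a₁x)(b₀ + b₁x) = 0` in `R[x]`, each product `aᵢbⱼ` is zero. -/
def LinearArmendariz (R : Type*) [Ring R] : Prop :=
  ∀ a₀ a₁ b₀ b₁ : R,
    (C a₀ + C a₁ * X) * (C b₀ + C b₁ * X) = 0 →
      a₀ * b₀ = 0 ∧ a₀ * b₁ = 0 ∧ a₁ * b₀ = 0 ∧ a₁ * b₁ = 0

/-- A ring `R` is *Armendariz* if whenever `f g : R[x]` satisfy `f * g = 0`,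
every product of a coefficient of `f` with a coefficient of `g` is zero. -/
def Armendariz (R : Type*) [Ring R] : Prop :=
  ∀ f g : R[X], f * g = 0 → ∀ i j : ℕ, f.coeff i * g.coeff j = 0

/-- A multiplicatively closed set of central elements is a (right) Ore set. -/
def centralOreSet {R : Type*} [Ring R] (S : Submonoid R)
    (hcent : ∀ s ∈ S, s ∈ Set.center R) : OreLocalization.OreSet S where
  ore_right_cancel r₁ r₂ s h := ⟨s, by
    have hs := Semigroup.mem_center_iff.mp (hcent s s.2)
    rw [← hs r₁, ← hs r₂]; exact h⟩
  oreNum r _ := r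
  oreDenom _ s := s
  ore_eq r s := Semigroup.mem_center_iff.mp (hcent s s.2) r |>.symm ▸ rfl

/-!
Since every `s ∈ S` is central and regular, `R` embeds in `S⁻¹R` and any two fractions can be
written `u * a` and `u * b` over a common central unit `u`. A linear relation
`(A₀ + A₁x)(B₀ + B₁x) = 0` in `S⁻¹R` then becomes `(uv) * ((a₀ + a₁x)(b₀ + b₁x)) = 0`, so it
is the image of one in `R`; and each `Aᵢ Bⱼ = uv * aᵢ bⱼ` is central as soon as `aᵢ bⱼ` is.
Conversely, a relation in `R` maps to one in `S⁻¹R`, and centrality pulls back along the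
injective map `R → S⁻¹R`.
-/

open OreLocalization

section LinearProduct

variable {R : Type*} [Ring R]

lemma linear_mul_linear (a₀ a₁ b₀ b₁ : R) :
    (C a₀ + C a₁ * X) * (C b₀ + C b₁ * X) =
      C (a₀ * b₀) + C (a₀ * b₁ + a₁ * b₀) * X + C (a₁ * b₁) * X ^ 2 := by
  simp only [map_add, map_mul, add_mul, mul_add, ← mul_assoc, sq]
  simp only [mul_assoc, X_mul_C]
  abel

lemma linear_mul_linear_eq_zero_iff (a₀ a₁ b₀ b₁ : R) :
    (C a₀ + C a₁ * X) * (C b₀ + C b₁ * X) = 0 ↔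
      a₀ * b₀ = 0 ∧ a₀ * b₁ + a₁ * b₀ = 0 ∧ a₁ * b₁ = 0 := by
  rw [linear_mul_linear, Polynomial.ext_iff]
  constructor
  · intro h
    exact ⟨by simpa using h 0, by simpa [mul_assoc, coeff_X_pow] using h 1,
      by simpa [mul_assoc, coeff_X_pow] using h 2⟩
  · rintro ⟨h₀, h₁, h₂⟩ n
    simp [h₀, h₁, h₂]

end LinearProduct

section Transfer

variable {R T : Type*} [Ring R] [Ring T] {f : R →+* T}

lemma mem_center_of_map_mem_center (hf : Function.Injective f) {x : R}
    (hx : f x ∈ Set.center T) : x ∈ Set.center R :=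
  Semigroup.mem_center_iff.mpr fun g => hf <| by
    simpa only [map_mul] using Semigroup.mem_center_iff.mp hx (f g)

lemma CentralLinearArmendariz.of_injective (hf : Function.Injective f)
    (hT : CentralLinearArmendariz T) : CentralLinearArmendariz R := by
  intro a₀ a₁ b₀ b₁ h
  have hmap : (C (f a₀) + C (f a₁) * X) * (C (f b₀) + C (f b₁) * X) = 0 := by
    simpa using congrArg (Polynomial.map f) h
  obtain ⟨h₀₀, h₀₁, h₁₀, h₁₁⟩ := hT _ _ _ _ hmap
  simp only [← map_mul] at h₀₀ h₀₁ h₁₀ h₁₁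
  exact ⟨mem_center_of_map_mem_center hf h₀₀, mem_center_of_map_mem_center hf h₀₁,
    mem_center_of_map_mem_center hf h₁₀, mem_center_of_map_mem_center hf h₁₁⟩

lemma CentralLinearArmendariz.of_common_denominators (hf : Function.Injective f)
    (hcenter : ∀ c ∈ Set.center R, f c ∈ Set.center T)
    (hden : ∀ x y : T, ∃ (a b : R) (u : Tˣ), ↑u ∈ Set.center T ∧ x = u * f a ∧ y = u * f b)
    (hR : CentralLinearArmendariz R) : CentralLinearArmendariz T := by
  intro A₀ A₁ B₀ B₁ h
  obtain ⟨a₀, a₁, u, hu, rfl, rfl⟩ := hden A₀ A₁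
  obtain ⟨b₀, b₁, v, hv, rfl, rfl⟩ := hden B₀ B₁
  have hmul : ∀ a b : R, ↑u * f a * (↑v * f b) = ↑(u * v) * f (a * b) := fun a b => by
    rw [Units.val_mul, map_mul, mul_assoc, ← mul_assoc (f a),
      Semigroup.mem_center_iff.mp hv (f a)]
    simp only [mul_assoc]
  have huv : ↑(u * v) ∈ Set.center T := Units.val_mul u v ▸ Set.mul_mem_center hu hv
  have hab : (C a₀ + C a₁ * X) * (C b₀ + C b₁ * X) = 0 := by
    simpa only [linear_mul_linear_eq_zero_iff, hmul, ← mul_add, ← map_add,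
      Units.mul_right_eq_zero, map_eq_zero_iff f hf] using h
  obtain ⟨h₀₀, h₀₁, h₁₀, h₁₁⟩ := hR _ _ _ _ hab
  simp only [hmul]
  exact ⟨Set.mul_mem_center huv (hcenter _ h₀₀), Set.mul_mem_center huv (hcenter _ h₀₁),
    Set.mul_mem_center huv (hcenter _ h₁₀), Set.mul_mem_center huv (hcenter _ h₁₁)⟩

end Transfer

section CentralLocalization

variable {R : Type*} [Ring R] {S : Submonoid R} [OreSet S]

lemma oreDiv_eq_inv_numeratorUnit_mul (r : R) (s : S) :
    r /ₒ s = ↑(numeratorUnit s)⁻¹ * (numeratorHom r : R[S⁻¹]) := by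
  change r /ₒ s = (1 : R) /ₒ s * (r /ₒ 1)
  rw [mul_div_one, one_mul]

lemma numeratorHom_mem_center (hcent : ∀ s ∈ S, s ∈ Set.center R) {c : R}
    (hc : c ∈ Set.center R) : (numeratorHom c : R[S⁻¹]) ∈ Set.center R[S⁻¹] := by
  refine Semigroup.mem_center_iff.mpr fun z => ?_
  induction z using OreLocalization.ind with
  | _ r t =>
    have hcr : Commute (numeratorHom c : R[S⁻¹]) (numeratorHom r) :=
      Commute.map (Semigroup.mem_center_iff.mp hc r).symm numeratorHom
    have hct : Commute (numeratorHom c : R[S⁻¹]) (numeratorUnit t) :=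
      Commute.map (Semigroup.mem_center_iff.mp (hcent t t.2) c) numeratorHom
    rw [oreDiv_eq_inv_numeratorUnit_mul]
    exact (hct.units_inv_right.mul_right hcr).symm

lemma exists_common_denominator (hcent : ∀ s ∈ S, s ∈ Set.center R) (x y : R[S⁻¹]) :
    ∃ (a b : R) (s : S), x = a /ₒ s ∧ y = b /ₒ s := by
  induction x using OreLocalization.ind with
  | _ a s =>
    induction y using OreLocalization.ind with
    | _ b t =>
      have hts : t * s = s * t := Subtype.ext (Semigroup.mem_center_iff.mp (hcent s s.2) t)
      exact ⟨t * a, s * b, t * s, OreLocalization.expand' a s t,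
        hts ▸ OreLocalization.expand' b t s⟩

lemma exists_central_unit_mul_numerator (hcent : ∀ s ∈ S, s ∈ Set.center R)
    (x y : R[S⁻¹]) : ∃ (a b : R) (u : R[S⁻¹]ˣ), (u : R[S⁻¹]) ∈ Set.center R[S⁻¹] ∧
      x = u * (numeratorRingHom a : R[S⁻¹]) ∧ y = u * (numeratorRingHom b : R[S⁻¹]) := by
  obtain ⟨a, b, s, rfl, rfl⟩ := exists_common_denominator hcent x y
  exact ⟨a, b, (numeratorUnit s)⁻¹,
    Set.units_inv_mem_center (numeratorHom_mem_center hcent (hcent s s.2)),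
    oreDiv_eq_inv_numeratorUnit_mul a s, oreDiv_eq_inv_numeratorUnit_mul b s⟩

end CentralLocalization

/-- Let `S` be a multiplicatively closed subset of `R` consisting of central regular
elements.  Then `R` is central linear Armendariz iff the localization `S⁻¹R` is
central linear Armendariz. -/
theorem stmt_14 (R : Type*) [Ring R] (S : Submonoid R)
    (hcent : ∀ s ∈ S, s ∈ Set.center R)
    (hreg : ∀ s ∈ S, ∀ r : R, (r * s = 0 → r = 0) ∧ (s * r = 0 → r = 0)) :
    letI := centralOreSet S hcent
    (CentralLinearArmendariz R ↔ CentralLinearArmendariz (OreLocalization S R)) := by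
  let _ : OreSet S := centralOreSet S hcent
  have hinj : Function.Injective (numeratorRingHom : R →+* R[S⁻¹]) :=
    numeratorHom_inj fun s hs r hr => (hreg s hs r).2 hr
  exact ⟨CentralLinearArmendariz.of_common_denominators hinj
      (fun _ => numeratorHom_mem_center hcent) (exists_central_unit_mul_numerator hcent),
    CentralLinearArmendariz.of_injective hinj⟩
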